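/- Let m be a nonzero integer and let w ∈ ℚ[[u]] be a formal power series with zero constant coefficient satisfying w = u·(1 + w)^m. Then (1 + (1 − m)·w) · Σ_{k≥0} C(m·k, k)·u^k = 1 + w in ℚ[[u]]. -/

import Mathlib

/-!
Write `T = 1 + w`; it is a unit of `ℚ⟦X⟧` with `T = 1 + X T^m`, hence
`T^(s+1) = T^s + X T^(s+m)` for every integer `s`, and differentiating gives
`T^(1-m) T' = T + m X T'`.
Let `a(n, r)` be the `n`-th coefficient of `T' T^(r - m(n+1))`. The first relation says that
`a` satisfies Pascal's recurrence in `(n, r)`, and `a(0, r) = 1`. For `n > 0` the second relation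
writes `-n T' T^(-m(n+1))` as `X G' - n G` with `G = T^(-mn)`, a series whose `n`-th coefficient
vanishes, so `a(n, 0) = 0`. Hence `a(n, r) = C(r, n)`, and taking `r = mn` shows
`Σ C(mk, k) X^k = T' T^(-m)`. Multiplying by `1 + (1 - m) w = T - m X T^m` and using the
derivative relation once more gives `T`.
-/

open PowerSeries

/-- Generalized binomial coefficient `C(a, b) = a(a-1)⋯(a-b+1)/b!` for `a : ℚ`, `b : ℕ`. -/
noncomputable def gchoose (a : ℚ) (b : ℕ) : ℚ :=
  (∏ i ∈ Finset.range b, (a - i)) / (Nat.factorial b)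

/-- Integer power of a formal power series over `ℚ`: for nonnegative exponents the ordinary
power, for negative exponents the power of the inverse (`PowerSeries.inv`), which for a unit
(e.g. constant coefficient `1`) coincides with the power taken in the group of units. -/
noncomputable def psZpow (f : PowerSeries ℚ) (m : ℤ) : PowerSeries ℚ :=
  if 0 ≤ m then f ^ m.toNat else f⁻¹ ^ (-m).toNat

theorem gchoose_eq_choose (a : ℚ) (n : ℕ) : gchoose a n = Ring.choose a n := by
  rw [Ring.choose_eq_smul, ← Polynomial.aeval_eq_smeval, ← Polynomial.eval_map_algebraMap,
    descPochhammer_map, descPochhammer_eval_eq_prod_range, gchoose, smul_eq_mul, div_eq_inv_mul]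

theorem gchoose_intCast (r : ℤ) (n : ℕ) : gchoose r n = (Ring.choose r n : ℤ) := by
  rw [gchoose_eq_choose]
  exact (Ring.map_choose (Int.castRingHom ℚ) r n).symm

theorem eq_choose_of_pascal {R : Type*} [AddGroupWithOne R] {f : ℕ → ℤ → R}
    (zero_left : ∀ r, f 0 r = 1) (succ_zero : ∀ n, f (n + 1) 0 = 0)
    (succ_succ : ∀ n r, f (n + 1) (r + 1) = f n r + f (n + 1) r) (n : ℕ) (r : ℤ) :
    f n r = Ring.choose r n := by
  induction n generalizing r with
  | zero => simp [zero_left]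
  | succ n ihn =>
    induction r using Int.induction_on with
    | zero => simp [succ_zero]
    | succ r ihr => rw [succ_succ, ihn, ihr, Ring.choose_succ_succ, Int.cast_add]
    | pred r ihr =>
      have h := succ_succ n (-r - 1)
      have hc := Ring.choose_succ_succ (-(r : ℤ) - 1) n
      rw [sub_add_cancel] at h hc
      rw [ihr, ihn, hc, Int.cast_add] at h
      exact (add_left_cancel h).symm

theorem Derivation.leibniz_units_zpow {R A M : Type*} [CommRing R] [CommRing A] [Algebra R A]
    [AddCommGroup M] [Module A M] [Module R M] (D : Derivation R A M) (u : Aˣ) (n : ℤ) :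
    D (u ^ n).val = n • (u ^ (n - 1)).val • D u.val := by
  induction n using Int.induction_on with
  | zero => simp
  | succ k ih =>
    have h : u ^ ((k : ℤ) + 1) = u * u ^ (k : ℤ) := by group
    have h' : u * u ^ ((k : ℤ) - 1) = u ^ (k : ℤ) := by group
    rw [h, Units.val_mul, D.leibniz, ih, smul_comm, smul_smul, ← Units.val_mul, h',
      add_sub_cancel_right]
    module
  | pred k ih =>
    have h : u ^ (-(k : ℤ) - 1) = u ^ (-(k : ℤ)) * u⁻¹ := by group
    have h₁ : u ^ (-(k : ℤ)) * u⁻¹ ^ 2 = u ^ (-(k : ℤ) - 1 - 1) := by group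
    have h₂ : u⁻¹ * u ^ (-(k : ℤ) - 1) = u ^ (-(k : ℤ) - 1 - 1) := by group
    rw [h, Units.val_mul, D.leibniz, ih, D.leibniz_of_mul_eq_one u.inv_mul, smul_comm u⁻¹.val,
      neg_smul, smul_neg, smul_smul, smul_smul, ← Units.val_pow_eq_pow_val, ← Units.val_mul,
      ← Units.val_mul, h₁, h₂]
    module

namespace PowerSeries

variable {R : Type*} [CommRing R]

theorem coeff_X_mul_derivative (f : R⟦X⟧) (n : ℕ) :
    coeff n (X * d⁄dX R f) = n * coeff n f := by
  cases n with
  | zero => simp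
  | succ n =>
    rw [coeff_succ_X_mul, coeff_derivative, mul_comm]
    push_cast
    rfl

theorem constantCoeff_val_zpow {u : R⟦X⟧ˣ} (hu : constantCoeff u.val = 1) (r : ℤ) :
    constantCoeff (u ^ r).val = 1 := by
  have hmap : ∀ v : R⟦X⟧ˣ,
      constantCoeff v.val = Units.map (constantCoeff : R⟦X⟧ →+* R).toMonoidHom v :=
    fun _ ↦ rfl
  have h : Units.map (constantCoeff : R⟦X⟧ →+* R).toMonoidHom u = 1 := Units.ext hu
  rw [hmap, map_zpow, h, one_zpow, Units.val_one]

section FunctionalEquation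

variable {m : ℤ} {u : R⟦X⟧ˣ}

theorem val_zpow_add_one_of_eq (hu : u.val = 1 + X * (u ^ m).val) (r : ℤ) :
    (u ^ (r + 1)).val = (u ^ r).val + X * (u ^ (r + m)).val := by
  rw [zpow_add_one, zpow_add, Units.val_mul, Units.val_mul, hu]
  ring

theorem constantCoeff_val_zpow_of_eq (hu : u.val = 1 + X * (u ^ m).val) (r : ℤ) :
    constantCoeff (u ^ r).val = 1 :=
  constantCoeff_val_zpow (by simp [hu]) r

theorem constantCoeff_derivative_of_eq (hu : u.val = 1 + X * (u ^ m).val) :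
    constantCoeff (d⁄dX R u.val) = 1 := by
  rw [← coeff_zero_eq_constantCoeff_apply, coeff_derivative, hu, map_add, coeff_one,
    coeff_succ_X_mul, coeff_zero_eq_constantCoeff_apply, constantCoeff_val_zpow_of_eq hu]
  simp

theorem val_zpow_one_sub_mul_derivative_of_eq (hu : u.val = 1 + X * (u ^ m).val) :
    (u ^ (1 - m)).val * d⁄dX R u.val = u.val + (m : R⟦X⟧) * X * d⁄dX R u.val := by
  have hD : d⁄dX R u.val =
      (u ^ m).val + (m : R⟦X⟧) * X * (u ^ (m - 1)).val * d⁄dX R u.val := by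
    conv_lhs => rw [hu]
    rw [map_add, Derivation.map_one_eq_zero, Derivation.leibniz, Derivation.leibniz_units_zpow,
      derivative_X, smul_eq_mul, smul_eq_mul, smul_eq_mul, zsmul_eq_mul]
    ring
  have h₁ : (u ^ (1 - m)).val * (u ^ m).val = u.val := by
    rw [← Units.val_mul, ← zpow_add, sub_add_cancel, zpow_one]
  have h₂ : (u ^ (1 - m)).val * (u ^ (m - 1)).val = 1 := by
    rw [← Units.val_mul, ← zpow_add, sub_add_sub_cancel', sub_self, zpow_zero, Units.val_one]
  linear_combination (u ^ (1 - m)).val * hD + h₁ + ((m : R⟦X⟧) * X * d⁄dX R u.val) * h₂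

/- The `n`-th coefficient of `X G' - n G` vanishes for every `G`; for `G = u^(-mn)` the
derivative relation turns `X G' - n G` into `-n u' u^(-m(n+1))`. -/
theorem coeff_derivative_mul_val_zpow_eq_zero [IsAddTorsionFree R]
    (hu : u.val = 1 + X * (u ^ m).val) {n : ℕ} (hn : n ≠ 0) :
    coeff n (d⁄dX R u.val * (u ^ (-(m * (n + 1)))).val) = 0 := by
  set G := (u ^ (-(m * n))).val
  have h₁ : (u ^ (-(m * n) - 1)).val * (u ^ (1 - m)).val = (u ^ (-(m * (n + 1)))).val := by
    rw [← Units.val_mul, ← zpow_add]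
    congr 4
    ring
  have h₂ : (u ^ (-(m * n) - 1)).val * u.val = G := by
    rw [← Units.val_mul, ← zpow_add_one, sub_add_cancel]
  have hG : X * d⁄dX R G - (n : R⟦X⟧) * G =
      -(n : R⟦X⟧) * (d⁄dX R u.val * (u ^ (-(m * (n + 1)))).val) := by
    rw [Derivation.leibniz_units_zpow, smul_eq_mul, zsmul_eq_mul]
    push_cast
    linear_combination
      ((n : R⟦X⟧) * (u ^ (-(m * n) - 1)).val) * val_zpow_one_sub_mul_derivative_of_eq hu -
        ((n : R⟦X⟧) * d⁄dX R u.val) * h₁ + (n : R⟦X⟧) * h₂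
  have hcoeff := congrArg (coeff n) hG
  rw [map_sub, coeff_X_mul_derivative, ← map_natCast (C (R := R)), coeff_C_mul, sub_self,
    neg_mul, map_neg, coeff_C_mul, zero_eq_neg, ← nsmul_eq_mul,
    nsmul_eq_zero_iff_right hn] at hcoeff
  exact hcoeff

theorem coeff_derivative_mul_val_zpow [IsAddTorsionFree R]
    (hu : u.val = 1 + X * (u ^ m).val) (n : ℕ) (r : ℤ) :
    coeff n (d⁄dX R u.val * (u ^ (r - m * (n + 1))).val) = Ring.choose r n := by
  refine eq_choose_of_pascal
    (f := fun n r ↦ coeff n (d⁄dX R u.val * (u ^ (r - m * (n + 1))).val)) ?_ ?_ ?_ n r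
  · intro r
    rw [coeff_zero_eq_constantCoeff_apply, map_mul, constantCoeff_derivative_of_eq hu,
      constantCoeff_val_zpow_of_eq hu, one_mul]
  · intro n
    simpa only [zero_sub] using coeff_derivative_mul_val_zpow_eq_zero hu n.succ_ne_zero
  · intro n r
    have hexp : r + 1 - m * ((n + 1 : ℕ) + 1) = r - m * ((n + 1 : ℕ) + 1) + 1 := by ring
    have hexp' : r - m * ((n + 1 : ℕ) + 1) + m = r - m * (n + 1) := by push_cast; ring
    rw [hexp, val_zpow_add_one_of_eq hu, hexp', mul_add, map_add, mul_left_comm,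
      coeff_succ_X_mul, add_comm]

end FunctionalEquation

end PowerSeries

theorem psZpow_val_units (u : ℚ⟦X⟧ˣ) (r : ℤ) : psZpow u.val r = (u ^ r).val := by
  have hinv : u.val⁻¹ = u⁻¹.val := by
    rw [PowerSeries.inv_eq_iff_mul_eq_one (isUnit_iff_constantCoeff.mp u.isUnit).ne_zero]
    simp
  unfold psZpow
  split_ifs with h
  · lift r to ℕ using h
    simp
  · obtain ⟨n, rfl⟩ : ∃ n : ℕ, r = -n := ⟨(-r).toNat, by omega⟩
    simp [hinv]

theorem generating_function_identity_general (m : ℤ) (w : PowerSeries ℚ)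
    (hw : w = X * psZpow (1 + w) m) :
    (1 + PowerSeries.C (1 - (m : ℚ)) * w) *
        (PowerSeries.mk fun k => gchoose ((m : ℚ) * k) k) = 1 + w := by
  obtain ⟨u, hu⟩ : IsUnit (1 + w) := isUnit_iff_constantCoeff.mpr (by rw [map_add, hw]; simp)
  rw [← hu, psZpow_val_units] at hw
  have hT : u.val = 1 + X * (u ^ m).val := by rw [hu, ← hw]
  have hseries : (mk fun k ↦ gchoose ((m : ℚ) * k) k) = d⁄dX ℚ u.val * (u ^ (-m)).val := by
    ext n
    rw [coeff_mk, show (m : ℚ) * n = ((m * n : ℤ) : ℚ) by push_cast; ring, gchoose_intCast,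
      ← coeff_derivative_mul_val_zpow hT]
    congr 4
    ring
  have h₁ : u.val * (u ^ (-m)).val = (u ^ (1 - m)).val := by
    rw [← Units.val_mul, ← zpow_one_add, sub_eq_add_neg]
  have h₂ : (u ^ m).val * (u ^ (-m)).val = 1 := by
    rw [← Units.val_mul, ← zpow_add, add_neg_cancel, zpow_zero, Units.val_one]
  rw [hseries, ← hu, map_sub, map_one, map_intCast, hw]
  linear_combination val_zpow_one_sub_mul_derivative_of_eq hT + d⁄dX ℚ u.val * h₁ -
    ((m : ℚ⟦X⟧) * X * d⁄dX ℚ u.val) * h₂ - (d⁄dX ℚ u.val * (u ^ (-m)).val) * hT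

/-- If `w` has zero constant coefficient and satisfies `w = u(1+w)^m`, then
`(1 + (1−m)w) · Σ_{k≥0} C(mk, k) u^k = 1 + w`. -/
theorem generating_function_identity (m : ℤ) (hm : m ≠ 0) (w : PowerSeries ℚ)
    (hw0 : constantCoeff w = 0) (hw : w = X * psZpow (1 + w) m) :
    (1 + PowerSeries.C (1 - (m : ℚ)) * w) *
        (PowerSeries.mk fun k => gchoose ((m : ℚ) * k) k) = 1 + w :=
  generating_function_identity_general m w hw
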